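/- Let (V,d,b) be an information network, with NLT dynamics run for T steps from a transient initial set A and permanent initial set Â. Let v ∈ V and let W ⊆ V with v ∉ W be such that no node of W has a directed path (along edges of positive weight) to v. For W define the trajectory map Π_W : ((0,1)^V) → {0,1}^{W×{1,…,T}} by Π_W(θ)(w,t) = 1 iff w ∈ A_t(θ). Then for every η ∈ [0,1] and every Q ∈ {0,1}^{W×{1,…,T}}: μ{θ : θ_v ≤ η and Π_W(θ) = Q} = η · μ{θ : Π_W(θ) = Q}. -/
import Mathlib


open MeasureTheory

/-- An information network: a finite node set `V` with a distinguished void node `d`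
and a row-stochastic weight matrix `b` with entries in `[0,1]` and `b d d = 1`. -/
structure InfoNetwork (V : Type*) [Fintype V] where
  d : V
  b : V → V → ℝ
  b_nonneg : ∀ v u, 0 ≤ b v u
  b_le_one : ∀ v u, b v u ≤ 1
  row_sum : ∀ v, ∑ u, b v u = 1
  void_loop : b d d = 1

/-- The uniform probability measure on the interval `(0,1)`. -/
noncomputable def unifMeasure : Measure ℝ := volume.restrict (Set.Ioo (0:ℝ) 1)

/-- Product over `V` of uniform measures on `(0,1)`: the distribution of the thresholds. -/
noncomputable def thresholdMeasure (V : Type*) [Fintype V] : Measure (V → ℝ) :=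
  Measure.pi fun _ : V => unifMeasure

namespace InfoNetwork

variable {V : Type*} [Fintype V]

/-- The set of active nodes at time `t` under the non-progressive linear threshold model,
with transient initial set `A`, permanent initial set `Ahat` and thresholds `θ`. -/
noncomputable def activeSet (N : InfoNetwork V) (A Ahat : Set V) (θ : V → ℝ) : ℕ → Set V
  | 0 => A ∪ Ahat
  | t+1 => Ahat ∪
      {v | v ∉ Ahat ∧ θ v ≤ ∑ u, (N.activeSet A Ahat θ t).indicator (N.b v) u}

/-- `E[X^t_v(A,Ahat)]`: the probability (over the random thresholds) that `v` is active
at time `t`. -/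
noncomputable def EX (N : InfoNetwork V) (A Ahat : Set V) (t : ℕ) (v : V) : ℝ :=
  (thresholdMeasure V {θ | v ∈ N.activeSet A Ahat θ t}).toReal

/-- The expected influence over the period `[1,T]`. -/
noncomputable def sigmaBar (N : InfoNetwork V) (T : ℕ) (A Ahat : Set V) : ℝ :=
  (1 / (T : ℝ)) * ∑ t ∈ Finset.Icc 1 T, ∑ v, N.EX A Ahat t v

/-- The edge relation of the directed graph on `V \ {d}`. -/
def edgeRel (N : InfoNetwork V) (v u : V) : Prop :=
  v ≠ N.d ∧ u ≠ N.d ∧ 0 < N.b v u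

/-- The network is acyclic if the directed graph on `V \ {d}` has no directed cycle. -/
def Acyclic (N : InfoNetwork V) : Prop :=
  ∀ v, ¬ Relation.TransGen N.edgeRel v v

end InfoNetwork

/-- A real-valued set function `f` is submodular on the ground set `S`. -/
def SubmodularOn {V : Type*} (S : Set V) (f : Set V → ℝ) : Prop :=
  ∀ A B : Set V, A ⊆ B → B ⊆ S → ∀ w ∈ S, w ∉ B →
    f (insert w B) - f B ≤ f (insert w A) - f A

instance : IsProbabilityMeasure unifMeasure := by
  constructor
  simp [unifMeasure, Real.volume_Ioo]

lemma unifMeasure_Iic {η : ℝ} (hη1 : η ≤ 1) :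
    unifMeasure (Set.Iic η) = ENNReal.ofReal η := by
  rw [unifMeasure, Measure.restrict_apply measurableSet_Iic]
  refine le_antisymm ?_ ?_
  · calc volume (Set.Iic η ∩ Set.Ioo 0 1) ≤ volume (Set.Ioc 0 η) := by
          apply measure_mono
          rintro x ⟨hx1, hx2, _⟩
          exact ⟨hx2, hx1⟩
      _ = ENNReal.ofReal η := by simp [Real.volume_Ioc]
  · calc ENNReal.ofReal η = volume (Set.Ioo 0 η) := by simp [Real.volume_Ioo]
      _ ≤ volume (Set.Iic η ∩ Set.Ioo 0 1) := by
          apply measure_mono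
          rintro x ⟨hx1, hx2⟩
          exact ⟨le_of_lt hx2, hx1, lt_of_lt_of_le hx2 hη1⟩


lemma pi_unifMeasure_le {ι : Type*} [Fintype ι] [Subsingleton ι] (i0 : ι)
    {η : ℝ} (hη1 : η ≤ 1) :
    (Measure.pi fun _ : ι => unifMeasure) {a : ι → ℝ | a i0 ≤ η} = ENNReal.ofReal η := by
  have hset : {a : ι → ℝ | a i0 ≤ η} = Set.pi Set.univ fun _ => Set.Iic η := by
    ext a
    constructor
    · intro h i _
      exact (Subsingleton.elim i0 i) ▸ h
    · intro h
      exact h i0 (Set.mem_univ _)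
  rw [hset, Measure.pi_pi, Finset.prod_const, Finset.card_univ,
    Fintype.card_eq_one_iff.mpr ⟨i0, fun b => Subsingleton.elim b i0⟩, pow_one,
    unifMeasure_Iic hη1]

lemma active_congr {V : Type*} [Fintype V] (N : InfoNetwork V) (A Ahat : Set V) (θ θ' : V → ℝ) :
    ∀ t w, (∀ u, Relation.ReflTransGen (fun x y => 0 < N.b x y) w u → θ u = θ' u) →
      (w ∈ N.activeSet A Ahat θ t ↔ w ∈ N.activeSet A Ahat θ' t) := by
  intro t
  induction t with
  | zero => intro w _; simp [InfoNetwork.activeSet]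
  | succ t ih =>
    intro w h
    have hsum : ∑ u, (N.activeSet A Ahat θ t).indicator (N.b w) u
        = ∑ u, (N.activeSet A Ahat θ' t).indicator (N.b w) u := by
      refine Finset.sum_congr rfl fun u _ => ?_
      by_cases hb : 0 < N.b w u
      · have hiff := ih u (fun x hx => h x (Relation.ReflTransGen.head hb hx))
        by_cases hm : u ∈ N.activeSet A Ahat θ t
        · rw [Set.indicator_of_mem hm, Set.indicator_of_mem (hiff.mp hm)]
        · rw [Set.indicator_of_notMem hm,
            Set.indicator_of_notMem (fun hx => hm (hiff.mpr hx))]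
      · have hb0 : N.b w u = 0 :=
          le_antisymm (not_lt.mp hb) (N.b_nonneg w u)
        by_cases h1 : u ∈ N.activeSet A Ahat θ t <;>
          by_cases h2 : u ∈ N.activeSet A Ahat θ' t <;>
          simp [h1, h2, hb0]
    have hw : θ w = θ' w := h w Relation.ReflTransGen.refl
    simp only [InfoNetwork.activeSet, Set.mem_union, Set.mem_setOf_eq, hsum, hw]

/-- Independence: if no node of `W` has a directed path (along edges of
positive weight) to `v` and `v ∉ W`, then for every `η ∈ [0,1]` and every candidate
trajectory `Q` of the nodes of `W` over the times `1,…,T`, we have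
`μ{θ : θ v ≤ η and Π_W(θ) = Q} = η · μ{θ : Π_W(θ) = Q}`. -/
theorem threshold_indep_of_no_path {V : Type*} [Fintype V] (N : InfoNetwork V)
    (A Ahat : Set V) (hA : A ⊆ {x : V | x ≠ N.d}) (hAhat : Ahat ⊆ {x : V | x ≠ N.d})
    (T : ℕ) (v : V) (W : Set V) (hvW : v ∉ W)
    (hpath : ∀ w ∈ W, ¬ Relation.TransGen (fun x y => 0 < N.b x y) w v)
    (η : ℝ) (hη0 : 0 ≤ η) (hη1 : η ≤ 1) (Q : V → ℕ → Bool) :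
    thresholdMeasure V {θ | θ v ≤ η ∧ ∀ w ∈ W, ∀ t ∈ Finset.Icc 1 T,
        ((w ∈ N.activeSet A Ahat θ t) ↔ Q w t = true)} =
      ENNReal.ofReal η *
        thresholdMeasure V {θ | ∀ w ∈ W, ∀ t ∈ Finset.Icc 1 T,
          ((w ∈ N.activeSet A Ahat θ t) ↔ Q w t = true)} := by
  classical
  haveI : Fintype {x : V // x = v} := Subtype.fintype fun x => x = v
  set S : Set (V → ℝ) := {θ | ∀ w ∈ W, ∀ t ∈ Finset.Icc 1 T,
      ((w ∈ N.activeSet A Ahat θ t) ↔ Q w t = true)} with hSdef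
  -- invariance of S under changing the coordinate v
  have hS : ∀ θ θ' : V → ℝ, (∀ u, u ≠ v → θ u = θ' u) → (θ ∈ S → θ' ∈ S) := by
    intro θ θ' hagree hθ w hw t ht
    have key : ∀ u, Relation.ReflTransGen (fun x y => 0 < N.b x y) w u → θ u = θ' u := by
      intro u hu
      refine hagree u fun huv => ?_
      subst huv
      rcases Relation.reflTransGen_iff_eq_or_transGen.mp hu with h | h
      · exact hvW (h ▸ hw)
      · exact hpath w hw h
    rw [← active_congr N A Ahat θ θ' t w key]
    exact hθ w hw t ht
  set e := MeasurableEquiv.piEquivPiSubtypeProd (fun _ : V => ℝ) (· = v) with he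
  have hmp := measurePreserving_piEquivPiSubtypeProd (fun _ : V => unifMeasure) (· = v)
  set S₂ : Set ({u : V // ¬ u = v} → ℝ) :=
    {g | (fun u => if h : u = v then (0 : ℝ) else g ⟨u, h⟩) ∈ S} with hS₂def
  have hmem : ∀ θ : V → ℝ, θ ∈ S ↔ (fun i : {u : V // ¬ u = v} => θ i.1) ∈ S₂ := by
    intro θ
    constructor
    · intro h
      exact hS θ _ (fun u hu => by simp only [dif_neg hu]) h
    · intro h
      refine hS _ θ (fun u hu => by simp only [dif_neg hu]) h
  have hpre1 : e ⁻¹' (({a : {u : V // u = v} → ℝ | a ⟨v, rfl⟩ ≤ η}) ×ˢ S₂)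
      = {θ : V → ℝ | θ v ≤ η ∧ θ ∈ S} := by
    ext θ
    simp only [he, Set.mem_preimage, Set.mem_prod, MeasurableEquiv.piEquivPiSubtypeProd,
      Equiv.piEquivPiSubtypeProd, MeasurableEquiv.coe_mk, Equiv.coe_fn_mk,
      Set.mem_setOf_eq]
    rw [← hmem θ]
  have hpre2 : e ⁻¹' ((Set.univ : Set ({u : V // u = v} → ℝ)) ×ˢ S₂) = S := by
    ext θ
    simp only [he, Set.mem_preimage, Set.mem_prod, MeasurableEquiv.piEquivPiSubtypeProd,
      Equiv.piEquivPiSubtypeProd, MeasurableEquiv.coe_mk, Equiv.coe_fn_mk,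
      Set.mem_univ, true_and]
    rw [← hmem θ]
  have hmap : ∀ s : Set (({u : V // u = v} → ℝ) × ({u : V // ¬ u = v} → ℝ)),
      thresholdMeasure V (e ⁻¹' s) = Measure.map e (thresholdMeasure V) s :=
    fun s => (MeasurableEquiv.map_apply e s).symm
  show thresholdMeasure V {θ : V → ℝ | θ v ≤ η ∧ θ ∈ S} = ENNReal.ofReal η * thresholdMeasure V S
  rw [← hpre1, ← hpre2, hmap _, hmap _, thresholdMeasure, hmp.map_eq,
    Measure.prod_prod, Measure.prod_prod, measure_univ, one_mul]
  congr 1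
  haveI : Subsingleton {x : V // x = v} := ⟨fun a b => Subtype.ext (a.2.trans b.2.symm)⟩
  have hone := pi_unifMeasure_le (ι := {x : V // x = v}) ⟨v, rfl⟩ hη1
  convert hone using 3
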